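/- arXiv:0801.0874 — 2 statements merged into one kernel-verified Lean document; each statement's English description precedes it below -/
import Mathlib

section
/- For every α = (α_1,…,α_n) ∈ {0,…,r−1}^n and every w ∈ S_n, the Π-length of t^α w in G_{r,n} satisfies ℓ(t^α w) = |α| + ℓ(w), where |α| = α_1 + ⋯ + α_n. -/
/-!
Write `g = t^β u` and call `∑ βᵢ`, each `βᵢ ∈ ℤ/r` read in `{0, …, r-1}`, the weight of `g`.
Left multiplication by `t_i` raises the weight by at most one and fixes the permutation part `u`;
left multiplication by `s_i` merely permutes the coordinates of `β` and changes the length of `u`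
by at most one. So weight plus `ℓ(u)` is a lower bound for `ℓ(g)`. For `g = t^α w` this bound is
`|α| + ℓ(w)`, and it is attained by `t^α` written out letter by letter followed by a reduced word
for `w`.
-/

open Equiv SemidirectProduct

namespace CycSol

/-- The action of the symmetric group on the "torus" `(ℤ/r)^n` by permuting coordinates. -/
def act (r n : ℕ) : Equiv.Perm (Fin n) →* MulAut (Multiplicative (Fin n → ZMod r)) where
  toFun w :=
    { toFun := fun f => Multiplicative.ofAdd fun i => Multiplicative.toAdd f (w⁻¹ i)
      invFun := fun f => Multiplicative.ofAdd fun i => Multiplicative.toAdd f (w i)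
      left_inv := fun f => by
        show Multiplicative.ofAdd (fun i => Multiplicative.toAdd f (w⁻¹ (w i))) = f
        simp
      right_inv := fun f => by
        show Multiplicative.ofAdd (fun i => Multiplicative.toAdd f (w (w⁻¹ i))) = f
        simp
      map_mul' := fun f g => rfl }
  map_one' := by
    refine MulEquiv.ext fun f => ?_
    show Multiplicative.ofAdd (fun i => Multiplicative.toAdd f ((1 : Equiv.Perm (Fin n))⁻¹ i)) = f
    simp
  map_mul' := fun u v => by
    refine MulEquiv.ext fun f => ?_
    show Multiplicative.ofAdd (fun i => Multiplicative.toAdd f ((u * v)⁻¹ i)) = _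
    simp [Equiv.Perm.mul_apply, mul_inv_rev]

/-- The wreath product `(ℤ/r) ≀ S_n`, i.e. the complex reflection group `G(r,1,n)`. -/
abbrev Grn (r n : ℕ) :=
  SemidirectProduct (Multiplicative (Fin n → ZMod r)) (Equiv.Perm (Fin n)) (act r n)

/-- The generator `t_i`. -/
def tGen (r n : ℕ) (i : Fin n) : Grn r n :=
  inl (Multiplicative.ofAdd (Pi.single i 1))

/-- `sGen i j` is the transposition `(i,j)`, viewed inside `G(r,1,n)`. -/
def sGen (r n : ℕ) (i j : Fin n) : Grn r n := inr (Equiv.swap i j)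

/-- `t^α` for a vector `α ∈ {0,…,r-1}^n`. -/
def tPow (r n : ℕ) (α : Fin n → Fin r) : Grn r n :=
  inl (Multiplicative.ofAdd fun i => ((α i : ℕ) : ZMod r))

/-- The generating set `Π = {t_1,…,t_n, s_1,…,s_{n-1}}`. -/
def PiSet (r n : ℕ) : Set (Grn r n) :=
  {g | (∃ i : Fin n, g = tGen r n i) ∨
       (∃ i j : Fin n, (j : ℕ) = (i : ℕ) + 1 ∧ g = sGen r n i j)}

/-- The `Π`-length of an element of `G(r,1,n)`. -/
noncomputable def len (r n : ℕ) (g : Grn r n) : ℕ :=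
  sInf {k | ∃ l : List (Grn r n), l.length = k ∧ (∀ x ∈ l, x ∈ PiSet r n) ∧ l.prod = g}

/-- A signed composition of `n`: a list of nonzero integers whose absolute values sum to `n`. -/
def IsSignedComp (n : ℕ) (μ : List ℤ) : Prop :=
  (∀ x ∈ μ, x ≠ 0) ∧ (μ.map Int.natAbs).sum = n

/-- The type of signed compositions of `n`. -/
abbrev SComp (n : ℕ) := {l : List ℤ // IsSignedComp n l}

/-- `μ̄_i = |μ_1| + ⋯ + |μ_i|`. -/
def absPrefix (μ : List ℤ) (i : ℕ) : ℕ := ((μ.take i).map Int.natAbs).sum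

/-- The subset `Π_μ ⊆ Π` attached to a signed composition `μ` (here `t_j, s_j` are indexed by
`j : Fin n`, i.e. `0`-based). -/
def PiMu (r n : ℕ) (μ : List ℤ) : Set (Grn r n) :=
  {g | (∃ j : Fin n, (∃ i, i < μ.length ∧ 0 < μ.getD i 0 ∧
          absPrefix μ i ≤ (j : ℕ) ∧ (j : ℕ) < absPrefix μ (i + 1)) ∧ g = tGen r n j) ∨
       (∃ j k : Fin n, (k : ℕ) = (j : ℕ) + 1 ∧ (∃ i, i < μ.length ∧
          absPrefix μ i ≤ (j : ℕ) ∧ (k : ℕ) < absPrefix μ (i + 1)) ∧ g = sGen r n j k)}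

/-- The reflection subgroup `G_μ = ⟨Π_μ⟩`. -/
def Gmu (r n : ℕ) (μ : List ℤ) : Subgroup (Grn r n) := Subgroup.closure (PiMu r n μ)

/-- The subgroup `T = (ℤ/r)^n` of `G(r,1,n)`. -/
def Tsub (r n : ℕ) : Subgroup (Grn r n) :=
  (inl : Multiplicative (Fin n → ZMod r) →* Grn r n).range

/-- The subgroup `S_n` of `G(r,1,n)`. -/
def Ssub (r n : ℕ) : Subgroup (Grn r n) :=
  (inr : Equiv.Perm (Fin n) →* Grn r n).range

/-- `T_{-μ}`: the subgroup of `T` generated by those `t_i` not lying in `G_μ`. -/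
def Tneg (r n : ℕ) (μ : List ℤ) : Subgroup (Grn r n) :=
  Subgroup.closure {g | ∃ i : Fin n, tGen r n i ∉ Gmu r n μ ∧ g = tGen r n i}

/-- The Young subgroup `S_{μ^+} = G_μ ∩ S_n`, as a subgroup of `S_n`. -/
def youngS (r n : ℕ) (μ : List ℤ) : Subgroup (Equiv.Perm (Fin n)) :=
  (Gmu r n μ).comap (inr : Equiv.Perm (Fin n) →* Grn r n)

/-- `𝒟_{μ^+}`: the permutations of minimal (Coxeter = `Π`-) length in their right coset
`S_{μ^+} w`. -/
noncomputable def Dset (r n : ℕ) (μ : List ℤ) : Set (Equiv.Perm (Fin n)) :=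
  {d | ∀ w : Equiv.Perm (Fin n), w * d⁻¹ ∈ youngS r n μ →
        len r n (inr d) ≤ len r n (inr w)}

/-- `𝒟_{μ^+ν^+} = 𝒟_{μ^+} ∩ 𝒟_{ν^+}^{-1}`. -/
noncomputable def DD (r n : ℕ) (μ ν : List ℤ) : Set (Equiv.Perm (Fin n)) :=
  Dset r n μ ∩ {d | d⁻¹ ∈ Dset r n ν}

/-- `𝓔_μ`: the elements of minimal `Π`-length in their right coset `G_μ e`. -/
noncomputable def Ecal (r n : ℕ) (μ : List ℤ) : Set (Grn r n) :=
  {e | ∀ g : Grn r n, g * e⁻¹ ∈ Gmu r n μ → len r n e ≤ len r n g}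

/-- `E_μ = Σ_{e ∈ 𝓔_μ} e` in the group algebra `R G(r,1,n)`. -/
noncomputable def Emu (R : Type) [CommRing R] (r n : ℕ) (μ : List ℤ) :
    MonoidAlgebra R (Grn r n) :=
  ∑ᶠ e ∈ Ecal r n μ, MonoidAlgebra.of R (Grn r n) e

/-- The generating set `{E_μ : μ a signed composition of n}` of the cyclotomic Solomon
algebra. -/
def SolSet (R : Type) [CommRing R] (r n : ℕ) : Set (MonoidAlgebra R (Grn r n)) :=
  {x | ∃ μ : List ℤ, IsSignedComp n μ ∧ x = Emu R r n μ}

/-- The cyclotomic Solomon algebra `Sol(G(r,1,n))`. -/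
noncomputable def Sol (R : Type) [CommRing R] (r n : ℕ) :
    Subalgebra R (MonoidAlgebra R (Grn r n)) :=
  Algebra.adjoin R (SolSet R r n)


section WordLength

variable {r n : ℕ}

lemma len_le_length {l : List (Grn r n)} (hl : ∀ x ∈ l, x ∈ PiSet r n) :
    len r n l.prod ≤ l.length :=
  Nat.sInf_le ⟨l, rfl, hl, rfl⟩

lemma exists_list_length_eq_len {g : Grn r n} (hg : g ∈ Submonoid.closure (PiSet r n)) :
    ∃ l : List (Grn r n), l.length = len r n g ∧ (∀ x ∈ l, x ∈ PiSet r n) ∧ l.prod = g := by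
  obtain ⟨l, hl, rfl⟩ := Submonoid.exists_list_of_mem_closure hg
  exact Nat.sInf_mem (s := {k | ∃ l' : List (Grn r n), l'.length = k ∧ _})
    ⟨l.length, l, rfl, hl, rfl⟩

lemma len_one : len r n 1 = 0 :=
  Nat.le_zero.mp (len_le_length (l := []) (by simp))

lemma len_mul_le {a b : Grn r n} (ha : a ∈ Submonoid.closure (PiSet r n))
    (hb : b ∈ Submonoid.closure (PiSet r n)) : len r n (a * b) ≤ len r n a + len r n b := by
  obtain ⟨la, hla, hla_mem, rfl⟩ := exists_list_length_eq_len ha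
  obtain ⟨lb, hlb, hlb_mem, rfl⟩ := exists_list_length_eq_len hb
  rw [← hla, ← hlb, ← List.length_append, ← List.prod_append]
  exact len_le_length fun x hx => (List.mem_append.mp hx).elim (hla_mem x) (hlb_mem x)

lemma len_list_prod_le {l : List (Grn r n)} (hl : ∀ x ∈ l, x ∈ Submonoid.closure (PiSet r n)) :
    len r n l.prod ≤ (l.map (len r n)).sum := by
  induction l with
  | nil => simp [len_one]
  | cons x l ih =>
    rw [List.forall_mem_cons] at hl
    rw [List.prod_cons, List.map_cons, List.sum_cons]
    exact (len_mul_le hl.1 (Submonoid.list_prod_mem _ hl.2)).trans (by have := ih hl.2; omega)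

lemma len_pow_le {g : Grn r n} (hg : g ∈ Submonoid.closure (PiSet r n)) (k : ℕ) :
    len r n (g ^ k) ≤ k * len r n g := by
  induction k with
  | zero => simp [len_one]
  | succ k ih =>
    rw [pow_succ, add_one_mul]
    exact (len_mul_le (pow_mem hg k) hg).trans (by omega)

lemma tGen_mem_piSet (i : Fin n) : tGen r n i ∈ PiSet r n := Or.inl ⟨i, rfl⟩

lemma sGen_mem_piSet {i j : Fin n} (hij : (j : ℕ) = i + 1) : sGen r n i j ∈ PiSet r n :=
  Or.inr ⟨i, j, hij, rfl⟩

lemma len_le_one_of_mem_piSet {x : Grn r n} (hx : x ∈ PiSet r n) : len r n x ≤ 1 := by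
  simpa using len_le_length (l := [x]) (by simpa using hx)

lemma tPow_eq_prod_ofFn (α : Fin n → Fin r) :
    tPow r n α = (List.ofFn fun i => tGen r n i ^ (α i : ℕ)).prod := by
  have hmap : (List.ofFn fun i => tGen r n i ^ (α i : ℕ)) = (List.ofFn fun i =>
      Multiplicative.ofAdd (Pi.single i (1 : ZMod r)) ^ (α i : ℕ)).map inl := by
    simp [tGen, List.map_ofFn, Function.comp_def]
  rw [hmap, ← map_list_prod, List.prod_ofFn, tPow]
  congr 1
  simp_rw [← ofAdd_nsmul, ← ofAdd_sum, ← Pi.single_smul, nsmul_eq_mul, mul_one]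
  rw [Finset.univ_sum_single]

lemma tGen_pow_mem_closure (i : Fin n) (k : ℕ) :
    tGen r n i ^ k ∈ Submonoid.closure (PiSet r n) :=
  pow_mem (Submonoid.subset_closure (tGen_mem_piSet i)) k

lemma tPow_mem_closure (α : Fin n → Fin r) : tPow r n α ∈ Submonoid.closure (PiSet r n) := by
  rw [tPow_eq_prod_ofFn]
  exact Submonoid.list_prod_mem _ (List.forall_mem_ofFn_iff.2 fun i => tGen_pow_mem_closure i _)

lemma len_tPow_le (α : Fin n → Fin r) : len r n (tPow r n α) ≤ ∑ i, (α i : ℕ) := by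
  rw [tPow_eq_prod_ofFn]
  refine (len_list_prod_le (List.forall_mem_ofFn_iff.2 fun i => tGen_pow_mem_closure i _)).trans ?_
  rw [List.map_ofFn, List.sum_ofFn]
  refine Finset.sum_le_sum fun i _ =>
    (len_pow_le (Submonoid.subset_closure (tGen_mem_piSet i)) _).trans ?_
  simpa using Nat.mul_le_mul_left _ (len_le_one_of_mem_piSet (tGen_mem_piSet (r := r) i))

lemma inr_mem_closure (w : Equiv.Perm (Fin n)) : inr w ∈ Submonoid.closure (PiSet r n) := by
  cases n with
  | zero => simp [Subsingleton.elim w 1]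
  | succ m =>
    have hw : w ∈ Submonoid.closure (Set.range fun i : Fin m => swap i.castSucc i.succ) := by
      simp [Equiv.Perm.mclosure_swap_castSucc_succ]
    induction hw using Submonoid.closure_induction with
    | mem _ hx =>
      obtain ⟨i, rfl⟩ := hx
      exact Submonoid.subset_closure (sGen_mem_piSet (by simp))
    | one => simp
    | mul _ _ _ _ hu hv => simpa using mul_mem hu hv

lemma len_inr_swap_mul_le {i j : Fin n} (hij : (j : ℕ) = i + 1) (u : Equiv.Perm (Fin n)) :
    len r n (inr (swap i j * u)) ≤ len r n (inr u) + 1 := by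
  rw [map_mul, add_comm]
  exact (len_mul_le (Submonoid.subset_closure (sGen_mem_piSet hij)) (inr_mem_closure u)).trans
    (Nat.add_le_add_right (len_le_one_of_mem_piSet (sGen_mem_piSet hij)) _)

noncomputable def weight (g : Grn r n) : ℕ :=
  ∑ i, (Multiplicative.toAdd g.left i).val

lemma weight_mul_le (a b : Grn r n) : weight (a * b) ≤ weight a + weight b := by
  calc weight (a * b)
      ≤ ∑ i, ((Multiplicative.toAdd a.left i).val +
          (Multiplicative.toAdd b.left (a.right⁻¹ i)).val) :=
        Finset.sum_le_sum fun i _ => ZMod.val_add_le _ _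
    _ = weight a + weight b := by
        rw [Finset.sum_add_distrib]
        congr 1
        exact Fintype.sum_equiv a.right⁻¹ _ _ fun i => rfl

lemma weight_mul_inr (g : Grn r n) (w : Equiv.Perm (Fin n)) : weight (g * inr w) = weight g := by
  simp [weight]

lemma weight_one : weight (1 : Grn r n) = 0 := by
  simp [weight]

lemma weight_inr (w : Equiv.Perm (Fin n)) : weight (inr w : Grn r n) = 0 := by
  simpa [weight_one] using weight_mul_inr (1 : Grn r n) w

lemma weight_tGen_le (i : Fin n) : weight (tGen r n i) ≤ 1 := by
  rw [weight, Finset.sum_eq_single i (fun j _ hj => by simp [tGen, hj]) (by simp)]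
  simpa [tGen, ZMod.val_one_eq_one_mod] using Nat.mod_le 1 r

lemma weight_tPow (α : Fin n → Fin r) : weight (tPow r n α) = ∑ i, (α i : ℕ) :=
  Finset.sum_congr rfl fun i _ => ZMod.val_cast_of_lt (α i).isLt

lemma weight_add_len_right_le_length {l : List (Grn r n)}
    (hl : ∀ x ∈ l, x ∈ PiSet r n) : weight l.prod + len r n (inr l.prod.right) ≤ l.length := by
  induction l with
  | nil => simp [weight_one, len_one]
  | cons x l ih =>
    rw [List.forall_mem_cons] at hl
    have hweight := weight_mul_le x l.prod
    have htail := ih hl.2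
    rw [List.prod_cons, List.length_cons, mul_right]
    rcases hl.1 with ⟨i, rfl⟩ | ⟨i, j, hij, rfl⟩
    · have ht := weight_tGen_le (r := r) i
      rw [show (tGen r n i).right = 1 from rfl, one_mul]
      omega
    · have hs : weight (sGen r n i j) = 0 := weight_inr _
      have hswap := len_inr_swap_mul_le (r := r) hij l.prod.right
      rw [show (sGen r n i j).right = swap i j from rfl]
      omega

lemma weight_add_len_right_le_len {g : Grn r n}
    (hg : g ∈ Submonoid.closure (PiSet r n)) : weight g + len r n (inr g.right) ≤ len r n g := by
  obtain ⟨l, hlen, hl, rfl⟩ := exists_list_length_eq_len hg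
  exact hlen ▸ weight_add_len_right_le_length hl

end WordLength

theorem stmt0_general (r n : ℕ)
    (α : Fin n → Fin r) (w : Equiv.Perm (Fin n)) :
    len r n (tPow r n α * inr w) = (∑ i, (α i : ℕ)) + len r n (inr w) := by
  apply le_antisymm
  · exact (len_mul_le (tPow_mem_closure α) (inr_mem_closure w)).trans
      (Nat.add_le_add_right (len_tPow_le α) _)
  · have h := weight_add_len_right_le_len (mul_mem (tPow_mem_closure α) (inr_mem_closure w))
    rwa [weight_mul_inr, weight_tPow, mul_right, right_inr, tPow, right_inl, one_mul] at h

theorem stmt0 (r n : ℕ) (hr : 2 ≤ r) (hn : 1 ≤ n)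
    (α : Fin n → Fin r) (w : Equiv.Perm (Fin n)) :
    len r n (tPow r n α * inr w) = (∑ i, (α i : ℕ)) + len r n (inr w) :=
  stmt0_general r n α w

end CycSol
end

section
/- For every subset J ⊆ Π there is a unique signed composition μ of n such that ⟨J⟩ = G_μ. Consequently, G_{r,n} has exactly 2·3^{n−1} distinct reflection subgroups. -/
/-!
A reflection subgroup `⟨J⟩` determines a signed composition: its blocks are the maximal runs of
positions joined by the `s_i ∈ J`, and a block is positive iff `⟨J⟩` contains its `t`'s (conjugating
by `s_i` moves `t_i` to `t_{i+1}`, so this holds for all or none of a block). Then `⟨J⟩ = G_μ`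
since `J ⊆ Π_μ ⊆ ⟨J⟩`.

Conversely `G_μ` determines `μ`: `s_i ∈ G_μ` iff `i, i+1` share a block, because all generators of
`G_μ` stabilise each initial segment ending at a block boundary; and `t_i ∈ G_μ` iff the block of
`i` is positive, because if it is negative all generators stabilise it and preserve the sum of the
torus coordinates over it, while `t_i` changes that sum by `1 ≠ 0` in `ℤ/r`.

Prepending a position to a signed composition either enlarges the first block or starts a new
block of either sign, so there are `2 · 3^(n-1)` signed compositions of `n`.
-/

open Equiv SemidirectProduct

namespace CycSol

def SameBlock (μ : List ℤ) (m : ℕ) : Prop :=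
  ∃ i < μ.length, absPrefix μ i ≤ m ∧ m + 1 < absPrefix μ (i + 1)

def InPosBlock (μ : List ℤ) (m : ℕ) : Prop :=
  ∃ i < μ.length, 0 < μ.getD i 0 ∧ absPrefix μ i ≤ m ∧ m < absPrefix μ (i + 1)

section Blocks

variable {μ : List ℤ} {x : ℤ} {l : List ℤ} {m : ℕ}

@[simp] lemma absPrefix_zero (μ : List ℤ) : absPrefix μ 0 = 0 := rfl

@[simp] lemma absPrefix_cons_succ (x : ℤ) (l : List ℤ) (i : ℕ) :
    absPrefix (x :: l) (i + 1) = x.natAbs + absPrefix l i := by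
  simp [absPrefix]

lemma absPrefix_mono (μ : List ℤ) : Monotone (absPrefix μ) := by
  intro i j hij
  obtain ⟨k, rfl⟩ := Nat.exists_eq_add_of_le hij
  simp [absPrefix, List.take_add]

lemma absPrefix_le_sum (μ : List ℤ) (i : ℕ) : absPrefix μ i ≤ (μ.map Int.natAbs).sum :=
  ((μ.take_sublist i).map _).sum_le_sum fun _ _ => Nat.zero_le _

lemma exists_block_of_lt_sum (hm : m < (μ.map Int.natAbs).sum) :
    ∃ i < μ.length, absPrefix μ i ≤ m ∧ m < absPrefix μ (i + 1) := by
  induction μ generalizing m with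
  | nil => simp at hm
  | cons x l ih =>
    by_cases hx : m < x.natAbs
    · exact ⟨0, by simp, by simp, by simpa⟩
    · simp only [List.map_cons, List.sum_cons] at hm
      obtain ⟨i, hi, h1, h2⟩ := ih (m := m - x.natAbs) (by omega)
      exact ⟨i + 1, by simpa using hi, by rw [absPrefix_cons_succ]; omega,
        by rw [absPrefix_cons_succ]; omega⟩

lemma block_unique {i j : ℕ} (hi : absPrefix μ i ≤ m ∧ m < absPrefix μ (i + 1))
    (hj : absPrefix μ j ≤ m ∧ m < absPrefix μ (j + 1)) : i = j := by
  by_contra hne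
  rcases Nat.lt_or_gt_of_ne hne with h | h
  · have := absPrefix_mono μ (show i + 1 ≤ j by omega); omega
  · have := absPrefix_mono μ (show j + 1 ≤ i by omega); omega

lemma SameBlock.lt_absPrefix_iff (h : SameBlock μ m) (i : ℕ) :
    m < absPrefix μ i ↔ m + 1 < absPrefix μ i := by
  obtain ⟨k, -, h1, h2⟩ := h
  rcases le_or_gt i k with hik | hik
  · have := absPrefix_mono μ hik; omega
  · have := absPrefix_mono μ (show k + 1 ≤ i by omega); omega

lemma SameBlock.succ_lt_sum (h : SameBlock μ m) : m + 1 < (μ.map Int.natAbs).sum := by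
  obtain ⟨i, -, -, h2⟩ := h
  exact h2.trans_le (absPrefix_le_sum μ _)

lemma InPosBlock.lt_sum (h : InPosBlock μ m) : m < (μ.map Int.natAbs).sum := by
  obtain ⟨i, -, -, -, h2⟩ := h
  exact h2.trans_le (absPrefix_le_sum μ _)

lemma sameBlock_cons :
    SameBlock (x :: l) m ↔ m + 1 < x.natAbs ∨ (x.natAbs ≤ m ∧ SameBlock l (m - x.natAbs)) := by
  constructor
  · rintro ⟨_ | i, hi, h1, h2⟩
    · rw [absPrefix_cons_succ, absPrefix_zero] at h2; omega
    · simp only [absPrefix_cons_succ] at h1 h2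
      exact .inr ⟨by omega, i, by simpa using hi, by omega, by omega⟩
  · rintro (h | ⟨h, i, hi, h1, h2⟩)
    · exact ⟨0, by simp, by simp, by simpa⟩
    · exact ⟨i + 1, by simpa using hi, by rw [absPrefix_cons_succ]; omega,
        by rw [absPrefix_cons_succ]; omega⟩

lemma inPosBlock_cons : InPosBlock (x :: l) m ↔
    (0 < x ∧ m < x.natAbs) ∨ (x.natAbs ≤ m ∧ InPosBlock l (m - x.natAbs)) := by
  constructor
  · rintro ⟨_ | i, hi, hpos, h1, h2⟩
    · simp only [List.getD_cons_zero, absPrefix_cons_succ, absPrefix_zero] at hpos h2; omega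
    · simp only [absPrefix_cons_succ] at h1 h2
      exact .inr ⟨by omega, i, by simpa using hi, by simpa using hpos, by omega, by omega⟩
  · rintro (⟨hpos, h⟩ | ⟨h, i, hi, hpos, h1, h2⟩)
    · exact ⟨0, by simp, by simpa, by simp, by simpa⟩
    · exact ⟨i + 1, by simpa using hi, by simpa using hpos, by rw [absPrefix_cons_succ]; omega,
        by rw [absPrefix_cons_succ]; omega⟩

lemma sameBlock_cons_of_lt (hm : m < x.natAbs) : SameBlock (x :: l) m ↔ m + 1 < x.natAbs := by
  rw [sameBlock_cons]; omega

lemma inPosBlock_cons_of_lt (hm : m < x.natAbs) : InPosBlock (x :: l) m ↔ 0 < x := by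
  rw [inPosBlock_cons]; omega

@[simp] lemma sameBlock_cons_natAbs_add : SameBlock (x :: l) (x.natAbs + m) ↔ SameBlock l m := by
  rw [sameBlock_cons, Nat.add_sub_cancel_left, or_iff_right (by omega),
    and_iff_right (Nat.le_add_right _ _)]

@[simp] lemma inPosBlock_cons_natAbs_add : InPosBlock (x :: l) (x.natAbs + m) ↔ InPosBlock l m := by
  rw [inPosBlock_cons, Nat.add_sub_cancel_left, or_iff_right (by omega),
    and_iff_right (Nat.le_add_right _ _)]

end Blocks

theorem eq_of_sameBlock_iff_of_inPosBlock_iff {n : ℕ} {μ ν : List ℤ} (hμ : IsSignedComp n μ)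
    (hν : IsSignedComp n ν) (hS : ∀ m, SameBlock μ m ↔ SameBlock ν m)
    (hP : ∀ m, InPosBlock μ m ↔ InPosBlock ν m) : μ = ν := by
  induction μ generalizing n ν with
  | nil =>
    obtain _ | ⟨y, l'⟩ := ν
    · rfl
    · have hy := hν.1 y (by simp)
      have h := hν.2.trans hμ.2.symm
      simp only [List.map_cons, List.sum_cons, List.map_nil, List.sum_nil] at h
      omega
  | cons x l ih =>
    obtain _ | ⟨y, l'⟩ := ν
    · have hx := hμ.1 x (by simp)
      have h := hμ.2.trans hν.2.symm
      simp only [List.map_cons, List.sum_cons, List.map_nil, List.sum_nil] at h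
      omega
    have hx := hμ.1 x (by simp)
    have hy := hν.1 y (by simp)
    have habs : x.natAbs = y.natAbs := by
      by_contra hne
      have h := hS (min x.natAbs y.natAbs - 1)
      rw [sameBlock_cons_of_lt (by omega), sameBlock_cons_of_lt (by omega)] at h
      omega
    have hpos := hP 0
    rw [inPosBlock_cons_of_lt (by omega), inPosBlock_cons_of_lt (by omega)] at hpos
    obtain rfl : x = y := by omega
    have hl : IsSignedComp (n - x.natAbs) l :=
      ⟨fun z hz => hμ.1 z (by simp [hz]), by rw [← hμ.2]; simp⟩
    have hl' : IsSignedComp (n - x.natAbs) l' :=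
      ⟨fun z hz => hν.1 z (by simp [hz]), by rw [← hν.2, habs]; simp⟩
    rw [ih hl hl' (fun m => by simpa using hS (x.natAbs + m))
      (fun m => by simpa using hP (x.natAbs + m))]

lemma IsSignedComp.zero_notMem {n : ℕ} {μ : List ℤ} (hμ : IsSignedComp n μ) : 0 ∉ μ :=
  fun h => hμ.1 0 h rfl

lemma IsSignedComp.ne_nil {n : ℕ} {μ : List ℤ} (hμ : IsSignedComp (n + 1) μ) : μ ≠ [] := by
  rintro rfl; simpa using hμ.2

/-- Adds a new first position: `none` puts it into the first block, `some b` makes it a block of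
its own, positive iff `b`. -/
def extendLeft : Option Bool → List ℤ → List ℤ
  | none, [] => []
  | none, x :: l => (if 0 < x then x + 1 else x - 1) :: l
  | some b, l => (if b then 1 else -1) :: l

section ExtendLeft

variable {n : ℕ} {ν : List ℤ}

lemma natAbs_ite_add_sub_one (x : ℤ) : (if 0 < x then x + 1 else x - 1).natAbs = x.natAbs + 1 := by
  split_ifs <;> omega

lemma ite_add_sub_one_pos_iff (x : ℤ) : 0 < (if 0 < x then x + 1 else x - 1) ↔ 0 < x := by
  split_ifs <;> omega

lemma IsSignedComp.extendLeft_some (hν : IsSignedComp n ν) (b : Bool) :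
    IsSignedComp (n + 1) (extendLeft (some b) ν) := by
  refine ⟨?_, ?_⟩
  · simp only [extendLeft, List.mem_cons]
    rintro z (rfl | hz)
    · split_ifs <;> simp
    · exact hν.1 z hz
  · simp only [extendLeft, List.map_cons, List.sum_cons, hν.2]
    split_ifs <;> simp [add_comm]

lemma IsSignedComp.extendLeft (hν : IsSignedComp (n + 1) ν) (o : Option Bool) :
    IsSignedComp (n + 2) (extendLeft o ν) := by
  obtain _ | b := o
  · obtain _ | ⟨x, l⟩ := ν
    · simpa using hν.2
    refine ⟨?_, ?_⟩
    · simp only [extendLeft, List.mem_cons]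
      rintro z (rfl | hz)
      · split_ifs <;> omega
      · exact hν.1 z (by simp [hz])
    · have := hν.2
      simp only [extendLeft, List.map_cons, List.sum_cons, natAbs_ite_add_sub_one] at this ⊢
      omega
  · exact hν.extendLeft_some b

@[simp] lemma sameBlock_extendLeft_succ (o : Option Bool) (ν : List ℤ) (m : ℕ) :
    SameBlock (extendLeft o ν) (m + 1) ↔ SameBlock ν m := by
  obtain _ | b := o
  · obtain _ | ⟨x, l⟩ := ν
    · simp [extendLeft, SameBlock]
    simp [extendLeft, sameBlock_cons, natAbs_ite_add_sub_one]
  · cases b <;> simp [extendLeft, sameBlock_cons]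

@[simp] lemma inPosBlock_extendLeft_succ (o : Option Bool) (ν : List ℤ) (m : ℕ) :
    InPosBlock (extendLeft o ν) (m + 1) ↔ InPosBlock ν m := by
  obtain _ | b := o
  · obtain _ | ⟨x, l⟩ := ν
    · simp [extendLeft, InPosBlock]
    simp [extendLeft, inPosBlock_cons, natAbs_ite_add_sub_one, ite_add_sub_one_pos_iff]
  · cases b <;> simp [extendLeft, inPosBlock_cons]

lemma sameBlock_extendLeft_zero (o : Option Bool) (hν : 0 ∉ ν) :
    SameBlock (extendLeft o ν) 0 ↔ o = none ∧ ν ≠ [] := by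
  obtain _ | b := o
  · obtain _ | ⟨x, l⟩ := ν
    · simp [extendLeft, SameBlock]
    have hx : 0 < x.natAbs := Int.natAbs_pos.mpr fun h => hν (h ▸ List.mem_cons_self ..)
    rw [extendLeft, sameBlock_cons_of_lt (by rw [natAbs_ite_add_sub_one]; omega),
      natAbs_ite_add_sub_one]
    simpa using hx
  · simp only [extendLeft, sameBlock_cons]
    split_ifs <;> simp

lemma inPosBlock_extendLeft_none_zero (hν : 0 ∉ ν) :
    InPosBlock (extendLeft none ν) 0 ↔ InPosBlock ν 0 := by
  obtain _ | ⟨x, l⟩ := ν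
  · rfl
  have hx : 0 < x.natAbs := Int.natAbs_pos.mpr fun h => hν (h ▸ List.mem_cons_self ..)
  rw [extendLeft, inPosBlock_cons_of_lt (by rw [natAbs_ite_add_sub_one]; omega),
    inPosBlock_cons_of_lt hx, ite_add_sub_one_pos_iff]

lemma inPosBlock_extendLeft_some_zero (b : Bool) (ν : List ℤ) :
    InPosBlock (extendLeft (some b) ν) 0 ↔ b = true := by
  simp only [extendLeft, inPosBlock_cons]
  split_ifs <;> simp_all

end ExtendLeft

lemma isSignedComp_one_iff {μ : List ℤ} : IsSignedComp 1 μ ↔ μ = [1] ∨ μ = [-1] := by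
  constructor
  · rintro ⟨hne, hsum⟩
    obtain _ | ⟨x, _ | ⟨y, l⟩⟩ := μ
    · simp at hsum
    · simp only [List.map_cons, List.map_nil, List.sum_cons, List.sum_nil] at hsum
      simp only [List.cons.injEq, and_true]
      omega
    · have := hne x (by simp); have := hne y (by simp)
      simp only [List.map_cons, List.sum_cons] at hsum
      omega
  · rintro (rfl | rfl) <;> simp [IsSignedComp]

lemma card_sComp_one : Nat.card (SComp 1) = 2 := by
  rw [← Set.ncard_pair (show [(1 : ℤ)] ≠ [-1] by simp), ← Nat.card_coe_set_eq]
  exact Nat.card_congr (Equiv.subtypeEquivRight fun μ => by simp [isSignedComp_one_iff])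

def extendLeftSComp (n : ℕ) (p : Option Bool × SComp (n + 1)) : SComp (n + 2) :=
  ⟨extendLeft p.1 p.2.1, p.2.2.extendLeft p.1⟩

lemma extendLeftSComp_injective (n : ℕ) : Function.Injective (extendLeftSComp n) := by
  rintro ⟨o, ν, hν⟩ ⟨o', ν', hν'⟩ h
  replace h : extendLeft o ν = extendLeft o' ν' := congrArg Subtype.val h
  have h0 := sameBlock_extendLeft_zero o hν.zero_notMem
  rw [h, sameBlock_extendLeft_zero o' hν'.zero_notMem] at h0
  obtain rfl : o = o' := by
    obtain _ | b := o <;> obtain _ | b' := o'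
    · rfl
    · simp [hν.ne_nil] at h0
    · simp [hν'.ne_nil] at h0
    · have hb := inPosBlock_extendLeft_some_zero b ν
      rw [h, inPosBlock_extendLeft_some_zero] at hb
      rw [Bool.eq_iff_iff.mpr hb]
  obtain rfl : ν = ν' := eq_of_sameBlock_iff_of_inPosBlock_iff hν hν'
    (fun m => by rw [← sameBlock_extendLeft_succ o, h, sameBlock_extendLeft_succ])
    (fun m => by rw [← inPosBlock_extendLeft_succ o, h, inPosBlock_extendLeft_succ])
  rfl

lemma extendLeftSComp_surjective (n : ℕ) : Function.Surjective (extendLeftSComp n) := by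
  rintro ⟨_ | ⟨x, l⟩, hμ⟩
  · simpa using hμ.2
  have hx := hμ.1 x (by simp)
  have hsum := hμ.2
  simp only [List.map_cons, List.sum_cons] at hsum
  have hl : ∀ z ∈ l, z ≠ 0 := fun z hz => hμ.1 z (by simp [hz])
  by_cases h1 : x.natAbs = 1
  · refine ⟨⟨some (decide (0 < x)), l, hl, by omega⟩, Subtype.ext ?_⟩
    simp only [extendLeftSComp, extendLeft, decide_eq_true_eq, List.cons.injEq, and_true]
    split_ifs <;> omega
  · refine ⟨⟨none, (if 0 < x then x - 1 else x + 1) :: l, ?_, ?_⟩, Subtype.ext ?_⟩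
    · simp only [List.mem_cons]
      rintro z (rfl | hz)
      · split_ifs <;> omega
      · exact hl z hz
    · simp only [List.map_cons, List.sum_cons]
      split_ifs <;> omega
    · simp only [extendLeftSComp, extendLeft, List.cons.injEq, and_true]
      split_ifs <;> omega

theorem card_sComp_succ (n : ℕ) : Nat.card (SComp (n + 1)) = 2 * 3 ^ n := by
  induction n with
  | zero => exact card_sComp_one
  | succ n ih =>
    rw [← Nat.card_congr (Equiv.ofBijective _ ⟨extendLeftSComp_injective n,
      extendLeftSComp_surjective n⟩), Nat.card_prod, ih,
      Nat.card_eq_fintype_card (α := Option Bool), Fintype.card_option, Fintype.card_bool]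
    ring

theorem exists_isSignedComp_sameBlock_inPosBlock (n : ℕ) (join pos : ℕ → Prop)
    (hcompat : ∀ m, m + 1 < n → join m → (pos m ↔ pos (m + 1))) :
    ∃ μ, IsSignedComp n μ ∧ (∀ m, m + 1 < n → (SameBlock μ m ↔ join m)) ∧
      ∀ m < n, InPosBlock μ m ↔ pos m := by
  induction n generalizing join pos with
  | zero => exact ⟨[], ⟨by simp, rfl⟩, by omega, by omega⟩
  | succ n ih =>
    obtain ⟨ν, hν, hS, hP⟩ := ih (fun m => join (m + 1)) (fun m => pos (m + 1))
      fun m hm => hcompat (m + 1) (by omega)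
    have hS' (o : Option Bool) (m : ℕ) (hm : m + 1 < n) :
        SameBlock (extendLeft o ν) (m + 1) ↔ join (m + 1) := by simpa using hS m hm
    have hP' (o : Option Bool) (m : ℕ) (hm : m < n) :
        InPosBlock (extendLeft o ν) (m + 1) ↔ pos (m + 1) := by simpa using hP m hm
    by_cases hjoin : 0 < n ∧ join 0
    · obtain ⟨k, rfl⟩ := Nat.exists_eq_add_of_lt hjoin.1
      refine ⟨extendLeft none ν, hν.extendLeft none, ?_, ?_⟩
      · rintro (_ | m) hm
        · simpa [sameBlock_extendLeft_zero none hν.zero_notMem, hν.ne_nil] using hjoin.2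
        · exact hS' none m (by omega)
      · rintro (_ | m) hm
        · rw [inPosBlock_extendLeft_none_zero hν.zero_notMem, hP 0 (by omega),
            hcompat 0 (by omega) hjoin.2]
        · exact hP' none m (by omega)
    · classical
      refine ⟨extendLeft (some (decide (pos 0))) ν, hν.extendLeft_some _, ?_, ?_⟩
      · rintro (_ | m) hm
        · simp only [sameBlock_extendLeft_zero _ hν.zero_notMem, reduceCtorEq, false_and,
            false_iff]
          exact fun h => hjoin ⟨by omega, h⟩
        · exact hS' _ m (by omega)
      · rintro (_ | m) hm
        · simp [inPosBlock_extendLeft_some_zero]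
        · exact hP' _ m (by omega)

section Group

open scoped Pointwise

variable {r n : ℕ}

lemma swap_mem_stabilizer_of_iff {α : Type*} [DecidableEq α] {a b : α} {S : Set α}
    (h : a ∈ S ↔ b ∈ S) : swap a b ∈ MulAction.stabilizer (Perm α) S := by
  refine MulAction.mem_stabilizer_set.mpr fun x => ?_
  rw [Perm.smul_def, swap_apply_def]
  split_ifs with hxa hxb <;> simp_all

lemma sum_comp_perm_of_mem_stabilizer {α M : Type*} [AddCommMonoid M] {σ : Perm α}
    {S : Finset α} (hσ : σ ∈ MulAction.stabilizer (Perm α) (S : Set α)) (f : α → M) :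
    ∑ x ∈ S, f (σ x) = ∑ x ∈ S, f x :=
  Finset.sum_equiv σ (fun x => (MulAction.mem_stabilizer_set.mp hσ x).symm) fun _ _ => rfl

def permStab (r n : ℕ) (S : Set (Fin n)) : Subgroup (Grn r n) :=
  (MulAction.stabilizer (Perm (Fin n)) S).comap rightHom

def sumZeroStab (r n : ℕ) (S : Finset (Fin n)) : Subgroup (Grn r n) where
  carrier := {g | g.right ∈ MulAction.stabilizer (Perm (Fin n)) (S : Set (Fin n)) ∧
    ∑ x ∈ S, Multiplicative.toAdd g.left x = 0}
  one_mem' := ⟨one_mem _, by simp⟩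
  mul_mem' := fun {a b} ha hb => by
    refine ⟨mul_mem ha.1 hb.1, ?_⟩
    change ∑ x ∈ S, (Multiplicative.toAdd a.left x + Multiplicative.toAdd b.left (a.right⁻¹ x)) = 0
    rw [Finset.sum_add_distrib, sum_comp_perm_of_mem_stabilizer (inv_mem ha.1), ha.2, hb.2,
      add_zero]
  inv_mem' := fun {a} ha => by
    refine ⟨inv_mem ha.1, ?_⟩
    change ∑ x ∈ S, -Multiplicative.toAdd a.left (a.right x) = 0
    rw [Finset.sum_neg_distrib, sum_comp_perm_of_mem_stabilizer ha.1, ha.2, neg_zero]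

lemma sGen_mul_tGen_mul_inv (i j : Fin n) :
    sGen r n i j * tGen r n i * (sGen r n i j)⁻¹ = tGen r n j := by
  simp only [sGen, tGen]
  rw [← map_inv, ← inl_aut]
  congr 1
  ext x
  simp only [act, MonoidHom.coe_mk, OneHom.coe_mk, MulEquiv.coe_mk, Equiv.coe_fn_mk,
    toAdd_ofAdd, swap_inv, Pi.single_apply, swap_apply_eq_iff, swap_apply_left]

lemma tGen_mem_iff_of_sGen_mem {H : Subgroup (Grn r n)} {i j : Fin n} (h : sGen r n i j ∈ H) :
    tGen r n i ∈ H ↔ tGen r n j ∈ H := by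
  have h' : sGen r n j i ∈ H := by rwa [sGen, swap_comm]
  constructor
  · intro hi
    simpa [sGen_mul_tGen_mul_inv] using mul_mem (mul_mem h hi) (inv_mem h)
  · intro hj
    simpa [sGen_mul_tGen_mul_inv] using mul_mem (mul_mem h' hj) (inv_mem h')

lemma piMu_subset_piSet (μ : List ℤ) : PiMu r n μ ⊆ PiSet r n := by
  rintro g (⟨j, -, rfl⟩ | ⟨j, k, hk, -, rfl⟩)
  exacts [.inl ⟨j, rfl⟩, .inr ⟨j, k, hk, rfl⟩]

lemma gmu_le_iff {μ : List ℤ} {H : Subgroup (Grn r n)} :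
    Gmu r n μ ≤ H ↔ (∀ j : Fin n, InPosBlock μ j → tGen r n j ∈ H) ∧
      ∀ j k : Fin n, (k : ℕ) = j + 1 → SameBlock μ j → sGen r n j k ∈ H := by
  rw [Gmu, Subgroup.closure_le]
  constructor
  · intro h
    exact ⟨fun j hj => h (.inl ⟨j, hj, rfl⟩), fun j k hk hjk => h (.inr ⟨j, k, hk, hk ▸ hjk, rfl⟩)⟩
  · rintro ⟨ht, hs⟩ g (⟨j, hj, rfl⟩ | ⟨j, k, hk, hjk, rfl⟩)
    · exact ht j hj
    · exact hs j k hk (by rwa [hk] at hjk)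

lemma tGen_mem_gmu {μ : List ℤ} {j : Fin n} (h : InPosBlock μ j) : tGen r n j ∈ Gmu r n μ :=
  (gmu_le_iff.mp le_rfl).1 j h

lemma sGen_mem_gmu {μ : List ℤ} {j k : Fin n} (hk : (k : ℕ) = j + 1) (h : SameBlock μ j) :
    sGen r n j k ∈ Gmu r n μ :=
  (gmu_le_iff.mp le_rfl).2 j k hk h

theorem tGen_mem_gmu_iff (hr : r ≠ 1) {μ : List ℤ} (hμ : (μ.map Int.natAbs).sum = n) (j : Fin n) :
    tGen r n j ∈ Gmu r n μ ↔ InPosBlock μ j := by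
  refine ⟨fun hj => ?_, tGen_mem_gmu⟩
  by_contra hneg
  obtain ⟨i, hi, hij⟩ := exists_block_of_lt_sum (by rw [hμ]; exact j.2)
  let B : Finset (Fin n) := {x | absPrefix μ i ≤ x ∧ (x : ℕ) < absPrefix μ (i + 1)}
  -- the block `B` of `j` is negative, so no generator of `G_μ` changes the coordinate sum over `B`
  have hle : Gmu r n μ ≤ sumZeroStab r n B := by
    refine gmu_le_iff.mpr ⟨fun j' hj' => ⟨one_mem _, ?_⟩, fun j' k' hk hjk => ⟨?_, by simp [sGen]⟩⟩
    · have hj'B : j' ∉ B := by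
        intro hj'B
        obtain ⟨i', hi', hpos, hi'j'⟩ := hj'
        obtain rfl := block_unique hi'j' (by simpa [B] using hj'B)
        exact hneg ⟨i', hi', hpos, hij⟩
      simp [tGen, Finset.sum_pi_single', hj'B]
    · refine swap_mem_stabilizer_of_iff ?_
      simp only [B, Finset.coe_filter, Finset.mem_univ, true_and, Set.mem_ofPred_eq, hk,
        ← not_lt, hjk.lt_absPrefix_iff]
  have hsum := (hle hj).2
  simp only [tGen, left_inl, toAdd_ofAdd, Finset.sum_pi_single'] at hsum
  have := ZMod.nontrivial_iff.mpr hr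
  simp [B, hij] at hsum

theorem sGen_mem_gmu_iff {μ : List ℤ} (hμ : (μ.map Int.natAbs).sum = n) {j k : Fin n}
    (hk : (k : ℕ) = j + 1) : sGen r n j k ∈ Gmu r n μ ↔ SameBlock μ j := by
  refine ⟨fun hjk => ?_, sGen_mem_gmu hk⟩
  by_contra hsep
  obtain ⟨i, hi, h1, h2⟩ := exists_block_of_lt_sum (by rw [hμ]; exact j.2)
  have hb : ¬ (k : ℕ) < absPrefix μ (i + 1) := fun h => hsep ⟨i, hi, h1, hk ▸ h⟩
  have hle : Gmu r n μ ≤ permStab r n {x | (x : ℕ) < absPrefix μ (i + 1)} :=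
    gmu_le_iff.mpr ⟨fun _ _ => by simp [permStab, tGen],
      fun j' k' hk' hjk' => swap_mem_stabilizer_of_iff (by simp [hk', hjk'.lt_absPrefix_iff])⟩
  have := MulAction.mem_stabilizer_set.mp (hle hjk) j
  simp only [sGen, rightHom_inr, Perm.smul_def, swap_apply_left, Set.mem_ofPred_eq] at this
  omega

end Group

theorem exists_closure_eq_gmu {r n : ℕ} {J : Set (Grn r n)} (hJ : J ⊆ PiSet r n) :
    ∃ μ, IsSignedComp n μ ∧ Subgroup.closure J = Gmu r n μ := by
  obtain ⟨μ, hμ, hS, hP⟩ := exists_isSignedComp_sameBlock_inPosBlock n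
    (fun m => ∃ j k : Fin n, (j : ℕ) = m ∧ (k : ℕ) = m + 1 ∧ sGen r n j k ∈ J)
    (fun m => ∃ j : Fin n, (j : ℕ) = m ∧ tGen r n j ∈ Subgroup.closure J) <| by
      rintro _ hm ⟨j, k, rfl, hk, hjk⟩
      have key := tGen_mem_iff_of_sGen_mem (Subgroup.subset_closure hjk)
      constructor
      · rintro ⟨j', hj', ht⟩
        obtain rfl : j' = j := Fin.ext hj'
        exact ⟨k, hk, key.mp ht⟩
      · rintro ⟨k', hk', ht⟩
        obtain rfl : k' = k := Fin.ext (hk'.trans hk.symm)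
        exact ⟨j, rfl, key.mpr ht⟩
  refine ⟨μ, hμ, le_antisymm ?_ ?_⟩
  · rw [Subgroup.closure_le]
    intro g hg
    rcases hJ hg with ⟨j, rfl⟩ | ⟨j, k, hk, rfl⟩
    · exact tGen_mem_gmu ((hP j j.2).mpr ⟨j, rfl, Subgroup.subset_closure hg⟩)
    · exact sGen_mem_gmu hk ((hS j (by omega)).mpr ⟨j, k, rfl, hk, hg⟩)
  · refine gmu_le_iff.mpr ⟨fun j hj => ?_, fun j k hk hjk => ?_⟩
    · obtain ⟨j', hj', ht⟩ := (hP j j.2).mp hj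
      rwa [Fin.ext hj'] at ht
    · obtain ⟨j', k', hj', hk', hs⟩ := (hS j (by omega)).mp hjk
      obtain rfl : j' = j := Fin.ext hj'
      obtain rfl : k' = k := Fin.ext (hk'.trans hk.symm)
      exact Subgroup.subset_closure hs

theorem eq_of_gmu_eq {r n : ℕ} (hr : r ≠ 1) {μ ν : List ℤ} (hμ : IsSignedComp n μ)
    (hν : IsSignedComp n ν) (h : Gmu r n μ = Gmu r n ν) : μ = ν := by
  refine eq_of_sameBlock_iff_of_inPosBlock_iff hμ hν (fun m => ?_) (fun m => ?_)
  · by_cases hm : m + 1 < n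
    · rw [← sGen_mem_gmu_iff (r := r) (j := ⟨m, by omega⟩) (k := ⟨m + 1, hm⟩) hμ.2 rfl, h,
        sGen_mem_gmu_iff hν.2 rfl]
    · exact iff_of_false (fun h' => hm (hμ.2 ▸ h'.succ_lt_sum))
        (fun h' => hm (hν.2 ▸ h'.succ_lt_sum))
  · by_cases hm : m < n
    · rw [← tGen_mem_gmu_iff (r := r) hr hμ.2 ⟨m, hm⟩, h, tGen_mem_gmu_iff hr hν.2]
    · exact iff_of_false (fun h' => hm (hμ.2 ▸ h'.lt_sum)) (fun h' => hm (hν.2 ▸ h'.lt_sum))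

theorem stmt1 (r n : ℕ) (hr : 2 ≤ r) (hn : 1 ≤ n) :
    (∀ J ⊆ PiSet r n, ∃! μ : SComp n, Subgroup.closure J = Gmu r n μ.1) ∧
    Set.ncard {H : Subgroup (Grn r n) | ∃ J ⊆ PiSet r n, H = Subgroup.closure J} =
      2 * 3 ^ (n - 1) := by
  have hinj : Function.Injective fun μ : SComp n => Gmu r n μ.1 :=
    fun μ ν h => Subtype.ext (eq_of_gmu_eq (by omega) μ.2 ν.2 h)
  have hrange : {H : Subgroup (Grn r n) | ∃ J ⊆ PiSet r n, H = Subgroup.closure J} =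
      Set.range fun μ : SComp n => Gmu r n μ.1 := by
    ext H
    constructor
    · rintro ⟨J, hJ, rfl⟩
      obtain ⟨μ, hμ, hJμ⟩ := exists_closure_eq_gmu hJ
      exact ⟨⟨μ, hμ⟩, hJμ.symm⟩
    · rintro ⟨μ, rfl⟩
      exact ⟨PiMu r n μ.1, piMu_subset_piSet μ.1, rfl⟩
  refine ⟨fun J hJ => ?_, ?_⟩
  · obtain ⟨μ, hμ, hJμ⟩ := exists_closure_eq_gmu hJ
    exact ⟨⟨μ, hμ⟩, hJμ, fun ν hν => hinj (hν.symm.trans hJμ)⟩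
  · obtain ⟨n, rfl⟩ := Nat.exists_eq_add_of_le' hn
    rw [hrange, ← Nat.card_coe_set_eq, Nat.card_range_of_injective hinj, card_sComp_succ,
      Nat.add_sub_cancel]

end CycSol
end
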